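/- Fix ψ ∈ ℂ and define 2×2 matrices S₀ = I, and for k ≥ 1: S_{2k} = [[1/(k!)², 0],[0, (ψ + 1/k - 2H_k)/(k!(k-1)!)]], S_{2k+1} = [[0, (ψ - 2H_k)/(k!)²],[1/((k+1)!k!), 0]] (with S₁ = [[0,ψ],[1,0]]). Let μ = diag(1/2,-1/2), 𝒰 = [[0,2],[2,0]], R = [[0,2],[0,0]]. Then for all k ≥ 1: k·S_k + S_k μ - μ S_k = 𝒰 S_{k-1} - S_{k-1} R. -/

import Mathlib

open Matrix

/-- Harmonic number `H_n = ∑_{k=1}^n 1/k` as a complex number. -/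
noncomputable def harmC (n : ℕ) : ℂ := ∑ i ∈ Finset.range n, (1 : ℂ) / (i + 1)

/-- The `S`-matrix of the Catalan Frobenius manifold at the special point
`(t¹,t²) = (0,1)`: `S₀ = I`,
`S_{2k} = [[1/(k!)², 0],[0,(ψ + 1/k - 2H_k)/(k!(k-1)!)]]` for `k ≥ 1`,
`S_{2k+1} = [[0,(ψ - 2H_k)/(k!)²],[1/((k+1)!k!),0]]`. -/
noncomputable def Scat (ψ : ℂ) (n : ℕ) : Matrix (Fin 2) (Fin 2) ℂ :=
  if n = 0 then 1
  else if n % 2 = 0 then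
    let k := n / 2
    !![1 / ((Nat.factorial k : ℂ))^2, 0;
       0, (ψ + 1/(k : ℂ) - 2 * harmC k) / ((Nat.factorial k : ℂ) * (Nat.factorial (k-1) : ℂ))]
  else
    let k := n / 2
    !![0, (ψ - 2 * harmC k) / ((Nat.factorial k : ℂ))^2;
       1 / ((Nat.factorial (k+1) : ℂ) * (Nat.factorial k : ℂ)), 0]

open Nat

/-! The matrices `μ`, `𝒰`, `R` are so sparse that the recursion is just four scalar equations,
one per entry. `S_k` alternates between diagonal and antidiagonal, so for each parity two of
the four equations read `0 = 0`, and the other two become identities of rational functions in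
`m`, `m!`, `ψ`, `H_m` once `H_{m+1} = H_m + 1/(m+1)` and `(m+1)! = (m+1) m!` are substituted. -/

lemma harmC_succ (m : ℕ) : harmC (m + 1) = harmC m + 1 / (m + 1) := by
  simp [harmC, Finset.sum_range_succ]

lemma Scat_zero (ψ : ℂ) : Scat ψ 0 = 1 := rfl

lemma Scat_even (ψ : ℂ) (m : ℕ) : Scat ψ (2 * m + 2) =
    !![1 / ((m + 1)! : ℂ) ^ 2, 0;
       0, (ψ + 1 / (m + 1) - 2 * harmC (m + 1)) / ((m + 1)! * m !)] := by
  simp [Scat, show (2 * m + 2) / 2 = m + 1 by omega]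

lemma Scat_odd (ψ : ℂ) (m : ℕ) : Scat ψ (2 * m + 1) =
    !![(0 : ℂ), (ψ - 2 * harmC m) / (m ! : ℂ) ^ 2;
       1 / ((m + 1)! * m !), 0] := by
  simp [Scat, show (2 * m + 1) / 2 = m by omega, show (2 * m + 1) % 2 = 1 by omega]

lemma calibration_eq_of_entries (c : ℂ) (A B : Matrix (Fin 2) (Fin 2) ℂ)
    (h00 : c * A 0 0 = 2 * B 1 0) (h01 : c * A 0 1 - A 0 1 = 2 * B 1 1 - 2 * B 0 0)
    (h10 : c * A 1 0 + A 1 0 = 2 * B 0 0) (h11 : c * A 1 1 = 2 * B 0 1 - 2 * B 1 0) :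
    c • A + A * !![1/2, 0; 0, -1/2] - !![1/2, 0; 0, -1/2] * A
      = !![0, 2; 2, 0] * B - B * !![0, 2; 0, 0] := by
  ext i j
  fin_cases i <;> fin_cases j <;> simp [Matrix.mul_apply, Fin.sum_univ_two, vecMul, dotProduct]
  · linear_combination h00
  · linear_combination h01
  · linear_combination h10
  · linear_combination h11

lemma Scat_recursion_even (ψ : ℂ) (m : ℕ) :
    ((2 * m + 2 : ℕ) : ℂ) • Scat ψ (2 * m + 2) + Scat ψ (2 * m + 2) * !![1/2, 0; 0, -1/2]
        - !![1/2, 0; 0, -1/2] * Scat ψ (2 * m + 2)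
      = !![0, 2; 2, 0] * Scat ψ (2 * m + 1) - Scat ψ (2 * m + 1) * !![0, 2; 0, 0] := by
  rw [Scat_even, Scat_odd]
  apply calibration_eq_of_entries <;> simp [harmC_succ, factorial_succ]
  · field_simp
  · field_simp; ring

lemma Scat_recursion_odd (ψ : ℂ) (m : ℕ) :
    ((2 * m + 3 : ℕ) : ℂ) • Scat ψ (2 * m + 3) + Scat ψ (2 * m + 3) * !![1/2, 0; 0, -1/2]
        - !![1/2, 0; 0, -1/2] * Scat ψ (2 * m + 3)
      = !![0, 2; 2, 0] * Scat ψ (2 * m + 2) - Scat ψ (2 * m + 2) * !![0, 2; 0, 0] := by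
  have hm : (m : ℂ) + 1 + 1 ≠ 0 := by exact_mod_cast (m + 1).succ_ne_zero
  rw [Scat_even, show 2 * m + 3 = 2 * (m + 1) + 1 by ring, Scat_odd]
  apply calibration_eq_of_entries <;> simp [harmC_succ, factorial_succ]
  all_goals (field_simp; ring)

lemma Scat_recursion_one (ψ : ℂ) :
    ((1 : ℕ) : ℂ) • Scat ψ 1 + Scat ψ 1 * !![1/2, 0; 0, -1/2]
        - !![1/2, 0; 0, -1/2] * Scat ψ 1
      = !![0, 2; 2, 0] * Scat ψ 0 - Scat ψ 0 * !![0, 2; 0, 0] := by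
  rw [Scat_zero, one_fin_two, Scat_odd ψ 0]
  apply calibration_eq_of_entries <;> norm_num [harmC]

/-- The explicit matrices `S_k` satisfy the calibration recursion
`k S_k + S_k μ - μ S_k = 𝒰 S_{k-1} - S_{k-1} R` at the special point. -/
theorem S_matrix_recursion_special_point (ψ : ℂ) :
    let mu : Matrix (Fin 2) (Fin 2) ℂ := !![1/2, 0; 0, -1/2]
    let U : Matrix (Fin 2) (Fin 2) ℂ := !![0, 2; 2, 0]
    let R : Matrix (Fin 2) (Fin 2) ℂ := !![0, 2; 0, 0]
    ∀ k : ℕ, 1 ≤ k →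
      (k : ℂ) • Scat ψ k + Scat ψ k * mu - mu * Scat ψ k
        = U * Scat ψ (k-1) - Scat ψ (k-1) * R := by
  intro mu U R k hk
  obtain ⟨j, rfl⟩ := Nat.exists_eq_add_of_le' hk
  rw [Nat.add_sub_cancel]
  rcases Nat.even_or_odd' j with ⟨m, rfl | rfl⟩
  · rcases m with _ | m
    · exact Scat_recursion_one ψ
    · exact Scat_recursion_odd ψ m
  · exact Scat_recursion_even ψ m
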